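/- Let c > 0. Suppose v and w are smooth real-valued functions on ℝ_t×ℝ_x×ℝ_y with ∂_x w = ∂_y v, satisfying the mKP-II equation ∂_t v + ∂_x³v + 3∂_y w − 6v²∂_x v + 6(∂_x v)·w = 0 on ℝ³. For either choice of sign, define ũ_±(t,x,y) = ±∂_x v(t,x,y) + w(t,x,y) − v(t,x,y)² + c/2 and u_±(t,x,y) = ũ_±(t, x − 3ct, y). Then u_± satisfies the KP-II equation in derivative form: ∂_x(∂_t u_± + ∂_x³u_± + 3∂_x(u_±²)) + 3∂_y²u_± = 0 everywhere on ℝ³. -/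

import Mathlib

namespace MiuraKP

abbrev E3 := ℝ × ℝ × ℝ

noncomputable def pd (e : E3) (F : E3 → ℝ) : E3 → ℝ := fun p => fderiv ℝ F p e

lemma pd_smooth {F : E3 → ℝ} (hF : ContDiff ℝ (⊤ : ℕ∞) F) (e : E3) : ContDiff ℝ (⊤ : ℕ∞) (pd e F) := by
  have h1 : ContDiff ℝ (⊤ : ℕ∞) (fderiv ℝ F) := hF.fderiv_right (by simp)
  exact (ContinuousLinearMap.apply ℝ ℝ e).contDiff.comp h1

lemma pd_comm {F : E3 → ℝ} (hF : ContDiff ℝ (⊤ : ℕ∞) F) (e₁ e₂ : E3) :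
    pd e₁ (pd e₂ F) = pd e₂ (pd e₁ F) := by
  funext p
  have hd : ContDiff ℝ (⊤ : ℕ∞) (fderiv ℝ F) := hF.fderiv_right (by simp)
  have key : ∀ e : E3, ∀ q : E3, fderiv ℝ (pd e F) q
      = (ContinuousLinearMap.apply ℝ ℝ e).comp (fderiv ℝ (fderiv ℝ F) q) := by
    intro e q
    exact ((ContinuousLinearMap.apply ℝ ℝ e).hasFDerivAt.comp q
      ((hd.differentiable (by simp) q).hasFDerivAt)).fderiv
  show fderiv ℝ (pd e₂ F) p e₁ = fderiv ℝ (pd e₁ F) p e₂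
  rw [key, key]
  exact second_derivative_symmetric (fun q => (hF.differentiable (by simp) q).hasFDerivAt)
    ((hd.differentiable (by simp) p).hasFDerivAt) e₁ e₂

lemma pd_add (e : E3) {X Y : E3 → ℝ} (hX : Differentiable ℝ X) (hY : Differentiable ℝ Y) :
    pd e (fun p => X p + Y p) = fun p => pd e X p + pd e Y p := by
  funext p
  show fderiv ℝ (fun q => X q + Y q) p e = fderiv ℝ X p e + fderiv ℝ Y p e
  rw [fderiv_fun_add (hX p) (hY p)]; rfl

lemma pd_sub (e : E3) {X Y : E3 → ℝ} (hX : Differentiable ℝ X) (hY : Differentiable ℝ Y) :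
    pd e (fun p => X p - Y p) = fun p => pd e X p - pd e Y p := by
  funext p
  show fderiv ℝ (fun q => X q - Y q) p e = fderiv ℝ X p e - fderiv ℝ Y p e
  rw [fderiv_fun_sub (hX p) (hY p)]; rfl

lemma pd_mul (e : E3) {X Y : E3 → ℝ} (hX : Differentiable ℝ X) (hY : Differentiable ℝ Y) :
    pd e (fun p => X p * Y p) = fun p => X p * pd e Y p + Y p * pd e X p := by
  funext p
  show fderiv ℝ (fun q => X q * Y q) p e = _
  rw [fderiv_fun_mul (hX p) (hY p)]; rfl

lemma pd_const_mul (e : E3) {X : E3 → ℝ} (hX : Differentiable ℝ X) (a : ℝ) :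
    pd e (fun p => a * X p) = fun p => a * pd e X p := by
  funext p
  show fderiv ℝ (fun q => a * X q) p e = _
  rw [fderiv_const_mul (hX p)]; rfl

lemma pd_sq (e : E3) {X : E3 → ℝ} (hX : Differentiable ℝ X) :
    pd e (fun p => X p ^ 2) = fun p => 2 * X p * pd e X p := by
  funext p
  have h : (fun q => X q ^ 2) = fun q => X q * X q := by funext q; ring
  show fderiv ℝ (fun q => X q ^ 2) p e = _
  rw [h, fderiv_fun_mul (hX p) (hX p)]
  show X p * fderiv ℝ X p e + X p * fderiv ℝ X p e = 2 * X p * fderiv ℝ X p e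
  ring

lemma pd_add_const (e : E3) (X : E3 → ℝ) (k : ℝ) :
    pd e (fun p => X p + k) = pd e X := by
  funext p
  show fderiv ℝ (fun q => X q + k) p e = fderiv ℝ X p e
  rw [fderiv_add_const]

lemma pd_const (e : E3) (k : ℝ) : pd e (fun _ => k) = fun _ => 0 := by
  funext p
  show fderiv ℝ (fun _ => k) p e = 0
  rw [fderiv_fun_const]; rfl

lemma pd_zero (e : E3) : pd e (fun _ => (0 : ℝ)) = fun _ => 0 := by
  funext p
  show fderiv ℝ (fun _ => (0:ℝ)) p e = 0
  rw [fderiv_fun_const]; rfl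

lemma deriv_comp_curve {K : E3 → ℝ} (hK : Differentiable ℝ K) {γ : ℝ → E3} {e : E3} {s : ℝ}
    (hγ : HasDerivAt γ e s) : deriv (fun r => K (γ r)) s = pd e K (γ s) :=
  ((hK (γ s)).hasFDerivAt.comp_hasDerivAt s hγ).deriv

lemma deriv_slice_x {K : E3 → ℝ} (hK : Differentiable ℝ K) (t y x : ℝ) :
    deriv (fun a => K (t, a, y)) x = pd (0,1,0) K (t, x, y) :=
  deriv_comp_curve hK ((hasDerivAt_const x t).prodMk ((hasDerivAt_id x).prodMk (hasDerivAt_const x y)))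

lemma deriv_slice_y {K : E3 → ℝ} (hK : Differentiable ℝ K) (t x y : ℝ) :
    deriv (fun b => K (t, x, b)) y = pd (0,0,1) K (t, x, y) :=
  deriv_comp_curve hK ((hasDerivAt_const y t).prodMk ((hasDerivAt_const y x).prodMk (hasDerivAt_id y)))

lemma deriv_slice_t {K : E3 → ℝ} (hK : Differentiable ℝ K) (x y t : ℝ) :
    deriv (fun s => K (s, x, y)) t = pd (1,0,0) K (t, x, y) :=
  deriv_comp_curve hK ((hasDerivAt_id t).prodMk ((hasDerivAt_const t x).prodMk (hasDerivAt_const t y)))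

lemma deriv_shift_x {K : E3 → ℝ} (hK : Differentiable ℝ K) (c t y x : ℝ) :
    deriv (fun a => K (t, a - 3 * c * t, y)) x = pd (0,1,0) K (t, x - 3 * c * t, y) := by
  have hγ : HasDerivAt (fun a : ℝ => ((t, a - 3 * c * t, y) : E3)) ((0,1,0) : E3) x := by
    have h2 : HasDerivAt (fun a : ℝ => a - 3 * c * t) 1 x := (hasDerivAt_id x).sub_const _
    exact (hasDerivAt_const x t).prodMk (h2.prodMk (hasDerivAt_const x y))
  exact deriv_comp_curve hK hγ

lemma deriv_shift_t {K : E3 → ℝ} (hK : Differentiable ℝ K) (c x y t : ℝ) :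
    deriv (fun s => K (s, x - 3 * c * s, y)) t
      = pd (1,0,0) K (t, x - 3 * c * t, y) - 3 * c * pd (0,1,0) K (t, x - 3 * c * t, y) := by
  have h2 : HasDerivAt (fun s : ℝ => x - 3 * c * s) (-(3 * c)) t := by
    simpa using ((hasDerivAt_id' (x := t)).const_mul (3 * c)).const_sub x
  have hγ : HasDerivAt (fun s : ℝ => ((s, x - 3 * c * s, y) : E3)) ((1, -(3*c), 0) : E3) t :=
    (hasDerivAt_id t).prodMk (h2.prodMk (hasDerivAt_const t y))
  rw [deriv_comp_curve hK hγ]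
  have he : ((1, -(3*c), 0) : E3) = ((1,0,0) : E3) - (3*c) • ((0,1,0) : E3) := by
    simp [Prod.ext_iff]
  show fderiv ℝ K (t, x - 3*c*t, y) (1, -(3*c), 0) = _
  rw [he, map_sub, map_smul]
  rfl


noncomputable def FF (v : ℝ → ℝ → ℝ → ℝ) : E3 → ℝ := fun p => v p.1 p.2.1 p.2.2

noncomputable def HH (c sgn : ℝ) (v w : ℝ → ℝ → ℝ → ℝ) : E3 → ℝ :=
  fun p => sgn * pd (0,1,0) (FF v) p + FF w p - FF v p ^ 2 + c / 2

lemma HH_def (c sgn : ℝ) (v w : ℝ → ℝ → ℝ → ℝ) :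
    HH c sgn v w = fun p => sgn * pd (0,1,0) (FF v) p + FF w p - FF v p ^ 2 + c / 2 := rfl

noncomputable def EE (v w : ℝ → ℝ → ℝ → ℝ) : E3 → ℝ := fun p =>
  pd (1,0,0) (FF v) p + pd (0,1,0) (pd (0,1,0) (pd (0,1,0) (FF v))) p
    + 3 * pd (0,0,1) (FF w) p - 6 * FF v p ^ 2 * pd (0,1,0) (FF v) p
    + 6 * pd (0,1,0) (FF v) p * FF w p

lemma EE_def (v w : ℝ → ℝ → ℝ → ℝ) :
    EE v w = fun p =>
      pd (1,0,0) (FF v) p + pd (0,1,0) (pd (0,1,0) (pd (0,1,0) (FF v))) p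
        + 3 * pd (0,0,1) (FF w) p - 6 * FF v p ^ 2 * pd (0,1,0) (FF v) p
        + 6 * pd (0,1,0) (FF v) p * FF w p := rfl

end MiuraKP

open MiuraKP

/-- The Miura transforms `M^c_±` map solutions of the mKP-II equation to solutions of the
KP-II equation (in derivative form).  Here `w` represents `∂_x⁻¹ ∂_y v` (so `∂_x w = ∂_y v`),
`ũ_± = ±∂_x v + w − v² + c/2` and `u_±(t,x,y) = ũ_±(t, x − 3ct, y)`. -/
theorem miura_transform_maps_mkpII_to_kpII (c : ℝ) (hc : 0 < c)
    (v w : ℝ → ℝ → ℝ → ℝ)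
    (hv : ContDiff ℝ (⊤ : ℕ∞) (fun p : ℝ × ℝ × ℝ => v p.1 p.2.1 p.2.2))
    (hw : ContDiff ℝ (⊤ : ℕ∞) (fun p : ℝ × ℝ × ℝ => w p.1 p.2.1 p.2.2))
    (hcompat : ∀ t x y, deriv (fun x' => w t x' y) x = deriv (fun y' => v t x y') y)
    (hmkpII : ∀ t x y,
      deriv (fun t' => v t' x y) t
        + deriv (deriv (deriv (fun x' => v t x' y))) x
        + 3 * deriv (fun y' => w t x y') y
        - 6 * (v t x y) ^ 2 * deriv (fun x' => v t x' y) x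
        + 6 * (deriv (fun x' => v t x' y) x) * w t x y = 0)
    (sgn : ℝ) (hsgn : sgn = 1 ∨ sgn = -1)
    (U : ℝ → ℝ → ℝ → ℝ)
    (hU : ∀ t x y, U t x y =
      sgn * deriv (fun x' => v t x' y) (x - 3 * c * t)
        + w t (x - 3 * c * t) y - (v t (x - 3 * c * t) y) ^ 2 + c / 2) :
    ∀ t x y,
      deriv (fun x' =>
          deriv (fun t' => U t' x' y) t
            + deriv (deriv (deriv (fun a => U t a y))) x'
            + 3 * deriv (fun a => (U t a y) ^ 2) x') x
        + 3 * deriv (deriv (fun y' => U t x y')) y = 0 := by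
  intro t x y
  have hFs : ContDiff ℝ (⊤ : ℕ∞) (FF v) := hv
  have hGs : ContDiff ℝ (⊤ : ℕ∞) (FF w) := hw
  -- smoothness of atoms
  have sFx := pd_smooth hFs (0,1,0)
  have sFxx := pd_smooth sFx (0,1,0)
  have sFxxx := pd_smooth sFxx (0,1,0)
  have sF4x := pd_smooth sFxxx (0,1,0)
  have sFy := pd_smooth hFs (0,0,1)
  have sFxy := pd_smooth sFx (0,0,1)
  have sFxxy := pd_smooth sFxx (0,0,1)
  have sFyy := pd_smooth sFy (0,0,1)
  have sFt := pd_smooth hFs (1,0,0)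
  have sFxt := pd_smooth sFx (1,0,0)
  have sFyt := pd_smooth sFy (1,0,0)
  have sGy := pd_smooth hGs (0,0,1)
  have sGt := pd_smooth hGs (1,0,0)
  have dF : Differentiable ℝ (FF v) := hFs.differentiable (by simp)
  have dG : Differentiable ℝ (FF w) := hGs.differentiable (by simp)
  have dFx := sFx.differentiable (by simp)
  have dFxx := sFxx.differentiable (by simp)
  have dFxxx := sFxxx.differentiable (by simp)
  have dF4x := sF4x.differentiable (by simp)
  have dFy := sFy.differentiable (by simp)
  have dFxy := sFxy.differentiable (by simp)
  have dFxxy := sFxxy.differentiable (by simp)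
  have dFyy := sFyy.differentiable (by simp)
  have dFt := sFt.differentiable (by simp)
  have dFxt := sFxt.differentiable (by simp)
  have dFyt := sFyt.differentiable (by simp)
  have dGy := sGy.differentiable (by simp)
  have dGt := sGt.differentiable (by simp)
  -- commutation of mixed partials (canonical orientation)
  have cFt := pd_comm hFs (0,1,0) (1,0,0)
  have cFxt := pd_comm sFx (0,1,0) (1,0,0)
  have cFy := pd_comm hFs (0,1,0) (0,0,1)
  have cFxy := pd_comm sFx (0,1,0) (0,0,1)
  have cFxxy := pd_comm sFxx (0,1,0) (0,0,1)
  have cFyy := pd_comm sFy (0,1,0) (0,0,1)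
  have cGt := pd_comm hGs (0,1,0) (1,0,0)
  have cGy := pd_comm hGs (0,1,0) (0,0,1)
  have cFty := pd_comm hFs (0,0,1) (1,0,0)
  -- compatibility ∂ₓ w = ∂ᵧ v
  have hC : pd (0,1,0) (FF w) = pd (0,0,1) (FF v) := by
    funext p
    obtain ⟨a, b, d⟩ := p
    exact ((deriv_slice_x dG a d b).symm.trans (hcompat a b d)).trans (deriv_slice_y dF a b d)
  -- mKP-II equation in pd form
  have hE0 : ∀ p : E3, EE v w p = 0 := by
    intro p
    obtain ⟨a, b, d⟩ := p
    have h := hmkpII a b d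
    have e1 : deriv (fun x' => v a x' d) = fun x' => pd (0,1,0) (FF v) (a, x', d) :=
      funext fun s => deriv_slice_x dF a d s
    have e2 : deriv (fun x' => pd (0,1,0) (FF v) (a, x', d))
        = fun x' => pd (0,1,0) (pd (0,1,0) (FF v)) (a, x', d) :=
      funext fun s => deriv_slice_x dFx a d s
    simp only [e1, e2, deriv_slice_x dFxx a d b,
      show deriv (fun t' => v t' b d) a = pd (1,0,0) (FF v) (a,b,d) from deriv_slice_t dF b d a,
      show deriv (fun y' => w a b y') d = pd (0,0,1) (FF w) (a,b,d) from deriv_slice_y dG a b d]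
      at h
    exact h
  have hE0f : EE v w = fun _ => 0 := funext hE0
  have hE1 : ∀ p : E3, pd (0,1,0) (EE v w) p = 0 := by
    intro p; rw [hE0f, pd_zero]
  have hE2 : ∀ p : E3, pd (0,1,0) (pd (0,1,0) (EE v w)) p = 0 := by
    intro p; rw [hE0f, pd_zero, pd_zero]
  have hE3 : ∀ p : E3, pd (0,0,1) (EE v w) p = 0 := by
    intro p; rw [hE0f, pd_zero]
  -- smoothness of the Miura transform
  have sH : ContDiff ℝ (⊤ : ℕ∞) (HH c sgn v w) := by rw [HH_def]; fun_prop
  have sH2 : ContDiff ℝ (⊤ : ℕ∞) (fun q => HH c sgn v w q ^ 2) := by fun_prop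
  have dH := sH.differentiable (by simp)
  have dHx := (pd_smooth sH (0,1,0)).differentiable (by simp)
  have dHxx := (pd_smooth (pd_smooth sH (0,1,0)) (0,1,0)).differentiable (by simp)
  have dHxxx :=
    (pd_smooth (pd_smooth (pd_smooth sH (0,1,0)) (0,1,0)) (0,1,0)).differentiable (by simp)
  have dHt := (pd_smooth sH (1,0,0)).differentiable (by simp)
  have dHy := (pd_smooth sH (0,0,1)).differentiable (by simp)
  have dH2 := sH2.differentiable (by simp)
  have dH2x := (pd_smooth sH2 (0,1,0)).differentiable (by simp)
  -- rewrite U in terms of HH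
  have hUf : U = fun a b d => HH c sgn v w (a, b - 3 * c * a, d) := by
    funext a b d
    rw [hU a b d,
      show deriv (fun x' => v a x' d) (b - 3 * c * a)
          = pd (0,1,0) (FF v) (a, b - 3 * c * a, d) from deriv_slice_x dF a d _]
    rfl
  simp only [hUf]
  -- convert the slice derivatives of HH into pd's
  have ex1 : deriv (fun a => HH c sgn v w (t, a - 3 * c * t, y))
      = fun a => pd (0,1,0) (HH c sgn v w) (t, a - 3 * c * t, y) :=
    funext fun s => deriv_shift_x dH c t y s
  have ex2 : deriv (fun a => pd (0,1,0) (HH c sgn v w) (t, a - 3 * c * t, y))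
      = fun a => pd (0,1,0) (pd (0,1,0) (HH c sgn v w)) (t, a - 3 * c * t, y) :=
    funext fun s => deriv_shift_x dHx c t y s
  have ex3 : ∀ s : ℝ, deriv (fun a => pd (0,1,0) (pd (0,1,0) (HH c sgn v w)) (t, a - 3 * c * t, y)) s
      = pd (0,1,0) (pd (0,1,0) (pd (0,1,0) (HH c sgn v w))) (t, s - 3 * c * t, y) :=
    fun s => deriv_shift_x dHxx c t y s
  have et1 : ∀ s : ℝ, deriv (fun t' => HH c sgn v w (t', s - 3 * c * t', y)) t
      = pd (1,0,0) (HH c sgn v w) (t, s - 3 * c * t, y)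
        - 3 * c * pd (0,1,0) (HH c sgn v w) (t, s - 3 * c * t, y) :=
    fun s => deriv_shift_t dH c s y t
  have exsq : ∀ s : ℝ, deriv (fun a => HH c sgn v w (t, a - 3 * c * t, y) ^ 2) s
      = pd (0,1,0) (fun q => HH c sgn v w q ^ 2) (t, s - 3 * c * t, y) :=
    fun s => deriv_shift_x dH2 c t y s
  have ey1 : deriv (fun y' => HH c sgn v w (t, x - 3 * c * t, y'))
      = fun y' => pd (0,0,1) (HH c sgn v w) (t, x - 3 * c * t, y') :=
    funext fun s => deriv_slice_y dH t (x - 3 * c * t) s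
  simp only [ex1, ex2, ex3, et1, exsq, ey1, deriv_slice_y dHy t (x - 3 * c * t) y]
  rw [show deriv (fun x' =>
        pd (1,0,0) (HH c sgn v w) (t, x' - 3 * c * t, y)
          - 3 * c * pd (0,1,0) (HH c sgn v w) (t, x' - 3 * c * t, y)
          + pd (0,1,0) (pd (0,1,0) (pd (0,1,0) (HH c sgn v w))) (t, x' - 3 * c * t, y)
          + 3 * pd (0,1,0) (fun q => HH c sgn v w q ^ 2) (t, x' - 3 * c * t, y)) x
      = pd (0,1,0) (fun p =>
          pd (1,0,0) (HH c sgn v w) p - 3 * c * pd (0,1,0) (HH c sgn v w) p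
            + pd (0,1,0) (pd (0,1,0) (pd (0,1,0) (HH c sgn v w))) p
            + 3 * pd (0,1,0) (fun q => HH c sgn v w q ^ 2) p) (t, x - 3 * c * t, y)
    from deriv_shift_x (K := fun p =>
          pd (1,0,0) (HH c sgn v w) p - 3 * c * pd (0,1,0) (HH c sgn v w) p
            + pd (0,1,0) (pd (0,1,0) (pd (0,1,0) (HH c sgn v w))) p
            + 3 * pd (0,1,0) (fun q => HH c sgn v w q ^ 2) p) (by fun_prop) c t y x]
  -- expand everything into canonical partial derivatives of FF v and FF w
  simp (disch := fun_prop) only [HH_def, EE_def, pd_add, pd_sub, pd_mul, pd_const_mul, pd_sq,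
    pd_add_const, pd_const, hC, cFt, cFxt, cFy, cFxy, cFxxy, cFyy, cGt, cGy, cFty,
    mul_zero, zero_mul, add_zero, zero_add, sub_zero] at hE0 hE1 hE2 hE3 ⊢
  have hs : sgn * sgn = 1 := by rcases hsgn with h | h <;> rw [h] <;> norm_num
  linear_combination (norm := ring_nf)
    sgn * hE2 (t, x - 3 * c * t, y) + hE3 (t, x - 3 * c * t, y)
      - 2 * FF v (t, x - 3 * c * t, y) * hE1 (t, x - 3 * c * t, y)
      - 2 * pd (0,1,0) (FF v) (t, x - 3 * c * t, y) * hE0 (t, x - 3 * c * t, y)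
      + (6 * (pd (0,1,0) (FF v) (t, x - 3 * c * t, y)
            * pd (0,1,0) (pd (0,1,0) (pd (0,1,0) (FF v))) (t, x - 3 * c * t, y)
          + pd (0,1,0) (pd (0,1,0) (FF v)) (t, x - 3 * c * t, y) ^ 2)) * hs
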